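/- arXiv:math/0007125 — 3 statements merged into one kernel-verified Lean document; each statement's English description precedes it below -/
import Mathlib

section
/- For n ≥ 1, e(n) = e(n−1) + p(n−1), where e(n) is the total number of removable cells over all partitions of n and p(n) is the number of partitions of n. -/
/-!
Deleting one copy of a part `a` is a bijection from the partitions of `n` having `a` as a part
onto the partitions of `n - a`. Counting pairs (partition, distinct part) by the part therefore
gives `e n = p 0 + p 1 + ⋯ + p (n - 1)`, and the recursion is the last term of this sum.
-/

/-- `Covers ν μ` means the Young diagram of `μ` is obtained from that of `ν` by
adding a single cell: one part of size `k` of `ν` (with `k = 0` meaning a new row)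
is replaced by a part of size `k + 1`. -/
def Covers {n : ℕ} (ν : Nat.Partition n) (μ : Nat.Partition (n + 1)) : Prop :=
  ∃ k, μ.parts = (k + 1) ::ₘ ν.parts.erase k

/-- `e n` : the total number of removable (extreme) cells over all partitions of `n`,
where the number of removable cells of a partition is its number of distinct part sizes. -/
def e (n : ℕ) : ℕ := ∑ l : Nat.Partition n, l.parts.toFinset.card

open Finset

namespace Nat.Partition

theorem toFinset_parts_eq_filter {n : ℕ} (p : n.Partition) :
    p.parts.toFinset = {a ∈ Icc 1 n | a ∈ p.parts} := by
  ext a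
  simp only [Multiset.mem_toFinset, mem_filter, mem_Icc]
  exact ⟨fun ha => ⟨⟨p.parts_pos ha, p.le_of_mem_parts ha⟩, ha⟩, And.right⟩

theorem card_filter_mem_parts {n a : ℕ} (ha1 : 1 ≤ a) (ha : a ≤ n) :
    #{p : n.Partition | a ∈ p.parts} = Fintype.card (n - a).Partition := by
  rw [← Fintype.card_subtype]
  exact Fintype.card_congr (partitionWithPartEquiv ha1 ha)

end Nat.Partition

theorem sum_Icc_one_sub {M : Type*} [AddCommMonoid M] (f : ℕ → M) (n : ℕ) :
    ∑ a ∈ Icc 1 n, f (n - a) = ∑ i ∈ range n, f i :=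
  sum_nbij' (n - ·) (n - ·)
    (fun a ha => by simp only [mem_Icc, mem_range] at ha ⊢; omega)
    (fun i hi => by simp only [mem_Icc, mem_range] at hi ⊢; omega)
    (fun a ha => by simp only [mem_Icc] at ha; omega)
    (fun i hi => by simp only [mem_range] at hi; omega)
    (fun _ _ => rfl)

theorem e_eq_sum_card_filter_mem_parts (n : ℕ) :
    e n = ∑ a ∈ Icc 1 n, #{p : n.Partition | a ∈ p.parts} := by
  simp only [e, Nat.Partition.toFinset_parts_eq_filter, card_filter]
  exact sum_comm

theorem e_eq_sum_range_card (n : ℕ) : e n = ∑ i ∈ range n, Fintype.card i.Partition := by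
  rw [e_eq_sum_card_filter_mem_parts, ← sum_Icc_one_sub]
  refine sum_congr rfl fun a ha => ?_
  rw [mem_Icc] at ha
  exact Nat.Partition.card_filter_mem_parts ha.1 ha.2

/-- For `n ≥ 1`, `e n = e (n - 1) + p (n - 1)`, where `p` is the partition counting
function. -/
theorem e_recursion (n : ℕ) (hn : 1 ≤ n) :
    e n = e (n - 1) + Fintype.card (Nat.Partition (n - 1)) := by
  obtain ⟨m, rfl⟩ := Nat.exists_eq_add_of_le' hn
  rw [Nat.add_sub_cancel, e_eq_sum_range_card, e_eq_sum_range_card, sum_range_succ]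
end

section
/- For every n ≥ 0, the total number of removable (extreme) cells over all partitions of n equals the sum of the partition numbers p(0) + p(1) + ... + p(n−1). -/
lemma part_sum_eq {n : ℕ} (μ : Nat.Partition n) {j : ℕ} (hj : j ∈ μ.parts) :
    j + (μ.parts.erase j).sum = n := by
  have := μ.parts_sum
  rw [← Multiset.cons_erase hj, Multiset.sum_cons] at this
  exact this

/-- Partitions of `n` having `j` as a part are in bijection with partitions of `n - j`. -/
def addPartEquiv (n j : ℕ) (hj : 1 ≤ j) (hjn : j ≤ n) :
    Nat.Partition (n - j) ≃ {μ : Nat.Partition n // j ∈ μ.parts} where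
  toFun ν := ⟨⟨j ::ₘ ν.parts,
      by intro i hi; rcases Multiset.mem_cons.1 hi with h | h
         · omega
         · exact ν.parts_pos h,
      by rw [Multiset.sum_cons, ν.parts_sum]; omega⟩,
    Multiset.mem_cons_self _ _⟩
  invFun μ := ⟨(μ.1.parts.erase j),
      fun hi => μ.1.parts_pos (Multiset.mem_of_mem_erase hi),
      by have := part_sum_eq μ.1 μ.2; omega⟩
  left_inv ν := by
    ext1
    simp [Multiset.erase_cons_head]
  right_inv μ := by
    ext1
    simp [Multiset.cons_erase μ.2]

lemma card_with_part (n j : ℕ) (hj : 1 ≤ j) (hjn : j ≤ n) :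
    Fintype.card {μ : Nat.Partition n // j ∈ μ.parts} = Fintype.card (Nat.Partition (n - j)) :=
  (Fintype.card_congr (addPartEquiv n j hj hjn)).symm

lemma toFinset_card_eq {n : ℕ} (μ : Nat.Partition n) :
    μ.parts.toFinset.card = ((Finset.Icc 1 n).filter (· ∈ μ.parts)).card := by
  congr 1
  ext j
  simp only [Multiset.mem_toFinset, Finset.mem_filter, Finset.mem_Icc]
  constructor
  · intro h
    have h1 := μ.parts_pos h
    have h2 := part_sum_eq μ h
    exact ⟨⟨h1, by omega⟩, h⟩
  · exact fun h => h.2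

/-- `e n = p 0 + p 1 + ⋯ + p (n - 1)`, where `p` is the partition counting function. -/
theorem e_eq_sum_partitions (n : ℕ) :
    e n = ∑ k ∈ Finset.range n, Fintype.card (Nat.Partition k) := by
  have h1 : e n = ∑ j ∈ Finset.Icc 1 n, Fintype.card {μ : Nat.Partition n // j ∈ μ.parts} := by
    unfold e
    simp_rw [toFinset_card_eq, Finset.card_filter]
    rw [Finset.sum_comm]
    refine Finset.sum_congr rfl fun j _ => ?_
    rw [Fintype.card_subtype, Finset.card_filter]
  rw [h1]
  have h2 : (∑ j ∈ Finset.Icc 1 n, Fintype.card {μ : Nat.Partition n // j ∈ μ.parts})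
      = ∑ j ∈ Finset.Icc 1 n, Fintype.card (Nat.Partition (n - j)) :=
    Finset.sum_congr rfl fun j hj =>
      card_with_part n j (Finset.mem_Icc.1 hj).1 (Finset.mem_Icc.1 hj).2
  rw [h2]
  refine Finset.sum_nbij' (i := fun j => n - j) (j := fun k => n - k) ?_ ?_ ?_ ?_ ?_
  · intro a ha; rw [Finset.mem_Icc] at ha; have : n - a ∈ Finset.range n := by rw [Finset.mem_range]; omega
    exact this
  · intro a ha; rw [Finset.mem_range] at ha; have : n - a ∈ Finset.Icc 1 n := by rw [Finset.mem_Icc]; omega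
    exact this
  · intro a ha; rw [Finset.mem_Icc] at ha; show n - (n - a) = a; omega
  · intro a ha; rw [Finset.mem_range] at ha; show n - (n - a) = a; omega
  · intro a ha; rfl
end

section
/- The total number of distinct part sizes, summed over all partitions of n, equals Σ_{k=0}^{n−1} p(k), where p(k) is the number of partitions of k. -/
/-- Partitions of `n` containing `s` are in bijection with partitions of `n - s`. -/
def partWithEquiv (n s : ℕ) (hs : 0 < s) (hsn : s ≤ n) :
    {l : Nat.Partition n // s ∈ l.parts} ≃ Nat.Partition (n - s) where
  toFun l := ⟨l.1.parts.erase s,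
    fun hi => l.1.parts_pos (Multiset.mem_of_mem_erase hi),
    by
      have := l.1.parts_sum
      have h := Multiset.cons_erase l.2
      have : s + (l.1.parts.erase s).sum = n := by
        rw [← Multiset.sum_cons, h, l.1.parts_sum]
      omega⟩
  invFun μ := ⟨⟨s ::ₘ μ.parts,
    by
      intro i hi
      rcases Multiset.mem_cons.1 hi with rfl | hi
      · exact hs
      · exact μ.parts_pos hi,
    by rw [Multiset.sum_cons, μ.parts_sum]; omega⟩,
    Multiset.mem_cons_self _ _⟩
  left_inv := by
    rintro ⟨l, hl⟩
    apply Subtype.ext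
    apply Nat.Partition.ext
    exact Multiset.cons_erase hl
  right_inv := by
    rintro μ
    apply Nat.Partition.ext
    simp [Multiset.erase_cons_head]

theorem card_part_with (n s : ℕ) (hs : 0 < s) (hsn : s ≤ n) :
    Fintype.card {l : Nat.Partition n // s ∈ l.parts} = Fintype.card (Nat.Partition (n - s)) :=
  Fintype.card_congr (partWithEquiv n s hs hsn)

/-- The total number of distinct part sizes, summed over all partitions of `n`,
equals `p 0 + p 1 + ⋯ + p (n - 1)`, where `p` is the partition counting function. -/
theorem sum_distinct_parts_eq_sum_partitions (n : ℕ) :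
    ∑ l : Nat.Partition n, l.parts.toFinset.card =
      ∑ k ∈ Finset.range n, Fintype.card (Nat.Partition k) := by
  have step1 : ∀ l : Nat.Partition n,
      l.parts.toFinset.card = ∑ s ∈ Finset.Icc 1 n, if s ∈ l.parts then 1 else 0 := by
    intro l
    simp_rw [← Multiset.mem_toFinset]
    rw [Finset.sum_ite_mem, Finset.sum_const, smul_eq_mul, mul_one]
    congr 1
    rw [eq_comm, Finset.inter_eq_right]
    intro s hs
    have hsl : s ∈ l.parts := Multiset.mem_toFinset.1 hs
    have h1 : 0 < s := l.parts_pos hsl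
    have h2 : s ≤ n := by
      have := Multiset.single_le_sum (fun x _ => Nat.zero_le x) s hsl
      rw [l.parts_sum] at this
      exact this
    exact Finset.mem_Icc.2 ⟨h1, h2⟩
  calc ∑ l : Nat.Partition n, l.parts.toFinset.card
      = ∑ l : Nat.Partition n, ∑ s ∈ Finset.Icc 1 n, if s ∈ l.parts then 1 else 0 := by
        exact Finset.sum_congr rfl fun l _ => step1 l
    _ = ∑ s ∈ Finset.Icc 1 n, ∑ l : Nat.Partition n, if s ∈ l.parts then 1 else 0 :=
        Finset.sum_comm
    _ = ∑ s ∈ Finset.Icc 1 n, Fintype.card {l : Nat.Partition n // s ∈ l.parts} := by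
        refine Finset.sum_congr rfl fun s _ => ?_
        rw [Fintype.card_subtype, Finset.card_filter]
    _ = ∑ s ∈ Finset.Icc 1 n, Fintype.card (Nat.Partition (n - s)) := by
        refine Finset.sum_congr rfl fun s hs => ?_
        obtain ⟨h1, h2⟩ := Finset.mem_Icc.1 hs
        exact card_part_with n s h1 h2
    _ = ∑ k ∈ Finset.range n, Fintype.card (Nat.Partition k) := by
        apply Finset.sum_nbij' (fun s => n - s) (fun k => n - k)
        · intro s hs; obtain ⟨h1, h2⟩ := Finset.mem_Icc.1 hs
          exact Finset.mem_range.2 (by omega)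
        · intro k hk; have := Finset.mem_range.1 hk
          exact Finset.mem_Icc.2 (by omega)
        · intro s hs; obtain ⟨h1, h2⟩ := Finset.mem_Icc.1 hs; omega
        · intro k hk; have := Finset.mem_range.1 hk; omega
        · intro s hs; rfl
end
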